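/- arXiv:1712.06792 — 4 statements merged into one kernel-verified Lean document; each statement's English description precedes it below -/
import Mathlib

section
/- For every x ∈ (0, π/2) and every positive integer n, Σ_{k=2}^{2n} (-1)^{k+1} A(k) x^{2k} < cos x - (sin x / x)³ < Σ_{k=2}^{2n+1} (-1)^{k+1} A(k) x^{2k}. -/
/-!
Since `sin³ x = (3 sin x - sin 3x) / 4`, the function `cos x - (sin x / x)³` is
`(4x³ cos x + sin 3x - 3 sin x) / (4x³)`, whose Taylor series is `∑ (-1)^(k+1) A(k) x^(2k)` with
`A(0) = A(1) = 0`. For `k ≥ 2` one has `A(k+1) ≤ 2/5 · A(k)`, so for `x² < 5/2`, in particular on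
`(0, π/2)`, the terms from `k = 2` on strictly decrease in absolute value, and the partial sums of
an alternating series with strictly decreasing terms lie alternately strictly above and below its sum.
-/

open Real Finset

/-- The coefficient `A(k) = (3^(2k+3) - 32k³ - 96k² - 88k - 27) / (4·(2k+3)!)`. -/
noncomputable def wchA (k : ℕ) : ℝ :=
  ((3 : ℝ) ^ (2 * k + 3) - 32 * (k : ℝ) ^ 3 - 96 * (k : ℝ) ^ 2 - 88 * (k : ℝ) - 27) /
    (4 * (Nat.factorial (2 * k + 3) : ℝ))

open Filter Topology

section AlternatingSeries

variable {E : Type*} [Ring E] [PartialOrder E] [IsOrderedRing E]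
  [TopologicalSpace E] [OrderClosedTopology E] {l : E} {f : ℕ → E}

theorem StrictAnti.alternating_series_lt_tendsto
    (hfl : Tendsto (fun n ↦ ∑ i ∈ range n, (-1) ^ i * f i) atTop (𝓝 l))
    (hfa : StrictAnti f) (k : ℕ) : ∑ i ∈ range (2 * k), (-1) ^ i * f i < l := by
  refine lt_of_lt_of_le ?_ (hfa.antitone.alternating_series_le_tendsto hfl (k + 1))
  rw [show 2 * (k + 1) = 2 * k + 1 + 1 by ring, sum_range_succ, sum_range_succ, add_assoc]
  simp only [pow_succ, Even.neg_one_pow (even_two_mul k), one_mul, neg_one_mul]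
  exact lt_add_of_pos_right _ (by simpa [← sub_eq_add_neg] using hfa (Nat.lt_succ_self _))

theorem StrictAnti.tendsto_lt_alternating_series
    (hfl : Tendsto (fun n ↦ ∑ i ∈ range n, (-1) ^ i * f i) atTop (𝓝 l))
    (hfa : StrictAnti f) (k : ℕ) : l < ∑ i ∈ range (2 * k + 1), (-1) ^ i * f i := by
  refine lt_of_le_of_lt (hfa.antitone.tendsto_le_alternating_series hfl (k + 1)) ?_
  rw [show 2 * (k + 1) + 1 = 2 * k + 1 + 1 + 1 by ring, sum_range_succ, sum_range_succ, add_assoc]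
  simp only [pow_succ, Even.neg_one_pow (even_two_mul k), one_mul, neg_one_mul, neg_neg]
  exact add_lt_of_neg_right _ (by simpa [neg_add_lt_iff_lt_add] using hfa (Nat.lt_succ_self _))

end AlternatingSeries

lemma wchA_eq (k : ℕ) :
    wchA k = ((3 ^ (2 * k + 3) - 3) / (2 * k + 3).factorial - 4 / (2 * k).factorial) / 4 := by
  have hfac : ((2 * k + 3).factorial : ℝ) =
      (2 * k + 3) * (2 * k + 2) * (2 * k + 1) * (2 * k).factorial := by
    rw [show 2 * k + 3 = 2 * k + 1 + 1 + 1 by ring, Nat.factorial_succ, Nat.factorial_succ,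
      Nat.factorial_succ]
    push_cast; ring
  rw [wchA, hfac]
  field_simp
  ring

lemma hasSum_wchA {x : ℝ} (hx : x ≠ 0) :
    HasSum (fun k ↦ (-1) ^ (k + 1) * wchA k * x ^ (2 * k)) (cos x - (sin x / x) ^ 3) := by
  have hsin : HasSum (fun k ↦
      (-1) ^ (k + 1) * (3 * x) ^ (2 * (k + 1) + 1) / (2 * (k + 1) + 1).factorial
        - 3 * ((-1) ^ (k + 1) * x ^ (2 * (k + 1) + 1) / (2 * (k + 1) + 1).factorial))
      (sin (3 * x) - 3 * sin x) := by
    refine (hasSum_nat_add_iff (f := fun k ↦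
      (-1) ^ k * (3 * x) ^ (2 * k + 1) / (2 * k + 1).factorial
        - 3 * ((-1) ^ k * x ^ (2 * k + 1) / (2 * k + 1).factorial)) 1).mpr ?_
    simpa using (hasSum_sin (3 * x)).sub ((hasSum_sin x).mul_left 3)
  have hcomb := (((hasSum_cos x).mul_left (4 * x ^ 3)).add hsin).div_const (4 * x ^ 3)
  rw [show (4 * x ^ 3 * cos x + (sin (3 * x) - 3 * sin x)) / (4 * x ^ 3) =
      cos x - (sin x / x) ^ 3 by rw [sin_three_mul]; field_simp; ring] at hcomb
  refine hcomb.congr_fun fun k ↦ ?_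
  rw [eq_div_iff (by positivity), wchA_eq, show 2 * (k + 1) + 1 = 2 * k + 3 by ring]
  ring
lemma hasSum_alternating_wchA {x : ℝ} (hx : x ≠ 0) :
    HasSum (fun j ↦ (-1) ^ j * (wchA (j + 2) * x ^ (2 * (j + 2)))) ((sin x / x) ^ 3 - cos x) := by
  have hA0 : wchA 0 = 0 := by norm_num [wchA]
  have hA1 : wchA 1 = 0 := by norm_num [wchA, Nat.factorial]
  have h := ((hasSum_nat_add_iff' 2).mpr (hasSum_wchA hx)).neg
  simp only [sum_range_succ, sum_range_zero, hA0, hA1, mul_zero, zero_mul, add_zero, sub_zero,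
    neg_sub] at h
  exact h.congr_fun fun j ↦ by ring

lemma sum_Icc_two_wchA (x : ℝ) (m : ℕ) :
    ∑ k ∈ Icc 2 (m + 1), (-1) ^ (k + 1) * wchA k * x ^ (2 * k) =
      -∑ j ∈ range m, (-1) ^ j * (wchA (j + 2) * x ^ (2 * (j + 2))) := by
  rw [← Ico_add_one_right_eq_Icc, sum_Ico_eq_sum_range, ← sum_neg_distrib]
  refine sum_congr (by simp) fun j _ ↦ ?_
  rw [add_comm 2 j]
  ring

lemma sixteen_mul_cubic_le_three_pow {k : ℕ} (hk : 2 ≤ k) :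
    16 * (32 * (k : ℝ) ^ 3 + 96 * (k : ℝ) ^ 2 + 88 * (k : ℝ) + 27) ≤ 11 * 3 ^ (2 * k + 3) := by
  induction k, hk using Nat.le_induction with
  | base => norm_num
  | succ k hk ih =>
    have hk' : (2 : ℝ) ≤ k := by exact_mod_cast hk
    rw [show 2 * (k + 1) + 3 = 2 * k + 3 + 2 by ring, pow_add]
    push_cast
    nlinarith

lemma wchA_pos {k : ℕ} (hk : 2 ≤ k) : 0 < wchA k := by
  have := sixteen_mul_cubic_le_three_pow hk
  unfold wchA
  exact div_pos (by linarith [pow_pos (three_pos : (0 : ℝ) < 3) (2 * k + 3)]) (by positivity)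

lemma five_mul_wchA_succ_le {k : ℕ} (hk : 2 ≤ k) : 5 * wchA (k + 1) ≤ 2 * wchA k := by
  have hc := sixteen_mul_cubic_le_three_pow hk
  have hk' : (2 : ℝ) ≤ k := by exact_mod_cast hk
  have hT : (0 : ℝ) < 3 ^ (2 * k + 3) := by positivity
  have hfac : ((2 * (k + 1) + 3).factorial : ℝ) =
      (2 * k + 5) * (2 * k + 4) * (2 * k + 3).factorial := by
    rw [show 2 * (k + 1) + 3 = 2 * k + 3 + 1 + 1 by ring, Nat.factorial_succ, Nat.factorial_succ]
    push_cast; ring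
  -- the numerator of `A(k)` is at least `5/16 · 3^(2k+3)` and `(2k+4)(2k+5) ≥ 72`, and
  -- `2 · 72 · 5/16 = 45 = 5 · 9`
  have h45 : 45 * (3 : ℝ) ^ (2 * k + 3) ≤
      2 * (3 ^ (2 * k + 3) - (32 * (k : ℝ) ^ 3 + 96 * (k : ℝ) ^ 2 + 88 * (k : ℝ) + 27)) *
        ((2 * k + 5) * (2 * k + 4)) := by
    have hP : (72 : ℝ) ≤ (2 * k + 5) * (2 * k + 4) := by nlinarith
    nlinarith [mul_le_mul_of_nonneg_left hP (by linarith : (0 : ℝ) ≤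
      3 ^ (2 * k + 3) - (32 * (k : ℝ) ^ 3 + 96 * (k : ℝ) ^ 2 + 88 * (k : ℝ) + 27))]
  unfold wchA
  rw [hfac, show 2 * (k + 1) + 3 = 2 * k + 3 + 2 by ring, pow_add]
  rw [mul_div_assoc', mul_div_assoc', div_le_div_iff₀ (by positivity) (by positivity)]
  push_cast
  nlinarith

lemma wchA_mul_pow_strictAnti {x : ℝ} (hx0 : x ≠ 0) (hx : x ^ 2 < 5 / 2) :
    StrictAnti fun j ↦ wchA (j + 2) * x ^ (2 * (j + 2)) := by
  refine strictAnti_nat_of_succ_lt fun j ↦ ?_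
  have hratio := five_mul_wchA_succ_le (k := j + 2) (by omega)
  have hpos := wchA_pos (k := j + 3) (by omega)
  have hpow : 0 < x ^ (2 * (j + 2)) := (even_two_mul _).pow_pos hx0
  calc wchA (j + 1 + 2) * x ^ (2 * (j + 1 + 2))
        = wchA (j + 2 + 1) * x ^ 2 * x ^ (2 * (j + 2)) := by ring_nf
    _ < wchA (j + 2) * x ^ (2 * (j + 2)) := by gcongr; nlinarith

theorem cos_sub_sinx_div_x_cubed_bounds :
    ∀ x ∈ Set.Ioo (0 : ℝ) (π / 2), ∀ n : ℕ, 1 ≤ n →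
      (∑ k ∈ Finset.Icc 2 (2 * n), (-1 : ℝ) ^ (k + 1) * wchA k * x ^ (2 * k))
          < Real.cos x - (Real.sin x / x) ^ 3 ∧
      Real.cos x - (Real.sin x / x) ^ 3
          < ∑ k ∈ Finset.Icc 2 (2 * n + 1), (-1 : ℝ) ^ (k + 1) * wchA k * x ^ (2 * k) := by
  rintro x ⟨hx0, hxπ⟩ n hn
  obtain ⟨m, rfl⟩ := Nat.exists_eq_add_of_le' hn
  have hx2 : x ^ 2 < 5 / 2 := by nlinarith [pi_lt_d2]
  have hanti := wchA_mul_pow_strictAnti hx0.ne' hx2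
  have hlim := (hasSum_alternating_wchA hx0.ne').tendsto_sum_nat
  constructor
  · rw [show 2 * (m + 1) = 2 * m + 1 + 1 by ring, sum_Icc_two_wchA]
    linarith [hanti.tendsto_lt_alternating_series hlim m]
  · rw [sum_Icc_two_wchA]
    linarith [hanti.alternating_series_lt_tendsto hlim (m + 1)]
end

section
/- For every nonzero real number x, cos x - (sin x / x)³ = Σ_{k=2}^{∞} (-1)^{k+1} A(k) x^{2k}, i.e. the function cos x - (sin x / x)³ has the everywhere-convergent power series expansion with coefficients (-1)^{k+1} A(k) on the even powers x^{2k}, k ≥ 2. -/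
open Real Finset

/-- For every nonzero real `x`,
`cos x - (sin x / x)³ = Σ_{k=2}^∞ (-1)^(k+1) A(k) x^(2k)` (the sum below is indexed so
that `k + 2` runs over `2, 3, 4, …`). -/
theorem cos_sub_sinx_div_x_cubed_series (x : ℝ) (hx : x ≠ 0) :
    HasSum (fun k : ℕ => (-1 : ℝ) ^ (k + 2 + 1) * wchA (k + 2) * x ^ (2 * (k + 2)))
      (Real.cos x - (Real.sin x / x) ^ 3) := by
  have hx3 : (4 : ℝ) * x ^ 3 ≠ 0 := by positivity
  -- series for (3 sin x - sin (3x)) / (4 x³) = (sin x / x)³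
  have hsin := (Real.hasSum_sin x).mul_left 3
  have hsin3 := Real.hasSum_sin (3 * x)
  have hcomb := (hsin.sub hsin3).div_const (4 * x ^ 3)
  have hval : (3 * Real.sin x - Real.sin (3 * x)) / (4 * x ^ 3) = (Real.sin x / x) ^ 3 := by
    rw [Real.sin_three_mul]
    field_simp
    ring
  rw [hval] at hcomb
  -- the 0-th term of this series vanishes; shift by 1
  set g : ℕ → ℝ := fun n =>
    (3 * ((-1) ^ n * x ^ (2 * n + 1) / ((2 * n + 1).factorial : ℝ)) -
      (-1) ^ n * (3 * x) ^ (2 * n + 1) / ((2 * n + 1).factorial : ℝ)) / (4 * x ^ 3) with hg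
  have hg0 : g 0 = 0 := by simp [hg]
  have hshift : HasSum (fun n => g (n + 1)) ((Real.sin x / x) ^ 3) := by
    have := (hasSum_nat_add_iff (f := g) 1 (g := (Real.sin x / x) ^ 3)).2
    apply this
    simpa [hg0] using hcomb
  -- subtract from the cosine series
  have hcos := Real.hasSum_cos x
  have hdiff := hcos.sub hshift
  -- identify the terms
  have hterm : ∀ n : ℕ,
      (-1 : ℝ) ^ n * x ^ (2 * n) / ((2 * n).factorial : ℝ) - g (n + 1)
        = (-1 : ℝ) ^ (n + 1) * wchA n * x ^ (2 * n) := by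
    intro n
    have hfact : ((2 * (n + 1) + 1).factorial : ℝ)
        = (2 * n + 3) * ((2 * n + 2) * ((2 * n + 1) * ((2 * n).factorial : ℝ))) := by
      have : 2 * (n + 1) + 1 = (2 * n + 3) := by ring
      rw [this]
      rw [show 2 * n + 3 = (2 * n + 2) + 1 from rfl, Nat.factorial_succ,
        show 2 * n + 2 = (2 * n + 1) + 1 from rfl, Nat.factorial_succ,
        show 2 * n + 1 = (2 * n) + 1 from rfl, Nat.factorial_succ]
      push_cast
      ring
    have hfne : ((2 * n).factorial : ℝ) ≠ 0 := by positivity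
    have hx' : x ≠ 0 := hx
    simp only [hg, wchA]
    rw [hfact]
    have h3x : (3 * x) ^ (2 * (n + 1) + 1) = 3 ^ (2 * n + 3) * x ^ (2 * (n + 1) + 1) := by
      rw [mul_pow]; ring_nf
    rw [h3x]
    have hfactA : ((2 * n + 3).factorial : ℝ)
        = (2 * n + 3) * ((2 * n + 2) * ((2 * n + 1) * ((2 * n).factorial : ℝ))) := by
      rw [show 2 * n + 3 = (2 * n + 2) + 1 from rfl, Nat.factorial_succ,
        show 2 * n + 2 = (2 * n + 1) + 1 from rfl, Nat.factorial_succ,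
        show 2 * n + 1 = (2 * n) + 1 from rfl, Nat.factorial_succ]
      push_cast
      ring
    rw [hfactA]
    have h1 : (0:ℝ) < 2 * (n:ℝ) + 1 := by positivity
    have h2 : (0:ℝ) < 2 * (n:ℝ) + 2 := by positivity
    have h3 : (0:ℝ) < 2 * (n:ℝ) + 3 := by positivity
    field_simp
    ring
  have : (fun n : ℕ => (-1 : ℝ) ^ n * x ^ (2 * n) / ((2 * n).factorial : ℝ) - g (n + 1))
      = fun n : ℕ => (-1 : ℝ) ^ (n + 1) * wchA n * x ^ (2 * n) := funext hterm
  rw [this] at hdiff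
  -- the first two terms (n = 0, 1) vanish; shift by 2
  have h0 : (-1 : ℝ) ^ (0 + 1) * wchA 0 * x ^ (2 * 0) = 0 := by
    norm_num [wchA]
  have h1 : (-1 : ℝ) ^ (1 + 1) * wchA 1 * x ^ (2 * 1) = 0 := by
    norm_num [wchA, Nat.factorial]
  have := (hasSum_nat_add_iff
      (f := fun n : ℕ => (-1 : ℝ) ^ (n + 1) * wchA n * x ^ (2 * n)) 2
      (g := Real.cos x - (Real.sin x / x) ^ 3)).2
  have hfinal := this (by
    rw [Finset.sum_range_succ, Finset.sum_range_one, h0, h1]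
    simpa using hdiff)
  simpa using hfinal
end

section
/- For every x ∈ (0, π/2), -x⁴/15 + 23x⁶/1890 - 41x⁸/37800 < cos x - (sin x / x)³ < -x⁴/15 + 23x⁶/1890 - 41x⁸/37800 + 53x¹⁰/831600. -/
set_option maxHeartbeats 1000000

open Real

lemma aux (f g : ℝ → ℝ) (hderiv : ∀ y, HasDerivAt f (g y) y)
    (h0 : f 0 = 0) (hg : ∀ y, 0 ≤ y → 0 ≤ g y) : ∀ x, 0 ≤ x → 0 ≤ f x := by
  intro x hx
  have hmono : MonotoneOn f (Set.Ici 0) :=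
    monotoneOn_of_deriv_nonneg (convex_Ici 0)
      (fun y _ => (hderiv y).continuousAt.continuousWithinAt)
      (fun y _ => (hderiv y).differentiableAt.differentiableWithinAt)
      (fun y hy => by
        rw [(hderiv y).deriv]
        exact hg y (le_of_lt (by simpa using hy)))
  have := hmono Set.self_mem_Ici (Set.mem_Ici.mpr hx) hx
  simpa [h0] using this

lemma ladder1 : ∀ x : ℝ, 0 ≤ x → 0 ≤ (x) - Real.sin x := by
  refine aux (fun x : ℝ => (x) - Real.sin x) (fun y => (1 - Real.cos y)) (fun y => ?_) (by norm_num) (fun y hy => ?_) 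
  · exact ((hasDerivAt_id y).sub (Real.hasDerivAt_sin y))
  · have h := Real.cos_le_one y
    push_cast
    nlinarith [h]

lemma ladder2 : ∀ x : ℝ, 0 ≤ x → 0 ≤ Real.cos x - (1 - x ^ 2 / 2) := by
  refine aux (fun x : ℝ => Real.cos x - (1 - x ^ 2 / 2)) (fun y => ((-Real.sin y) - (0 - (((2 : ℕ) : ℝ) * y ^ (2 - 1)) / 2))) (fun y => ?_) (by norm_num) (fun y hy => ?_) 
  · exact ((Real.hasDerivAt_cos y).sub ((hasDerivAt_const y (1:ℝ)).sub ((hasDerivAt_pow 2 y).div_const 2)))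
  · have h := ladder1 y hy
    push_cast
    nlinarith [h]

lemma ladder3 : ∀ x : ℝ, 0 ≤ x → 0 ≤ Real.sin x - (x - x ^ 3 / 6) := by
  refine aux (fun x : ℝ => Real.sin x - (x - x ^ 3 / 6)) (fun y => (Real.cos y - (1 - (((3 : ℕ) : ℝ) * y ^ (3 - 1)) / 6))) (fun y => ?_) (by norm_num) (fun y hy => ?_) 
  · exact ((Real.hasDerivAt_sin y).sub ((hasDerivAt_id y).sub ((hasDerivAt_pow 3 y).div_const 6)))
  · have h := ladder2 y hy
    push_cast
    nlinarith [h]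

lemma ladder4 : ∀ x : ℝ, 0 ≤ x → 0 ≤ (1 - x ^ 2 / 2 + x ^ 4 / 24) - Real.cos x := by
  refine aux (fun x : ℝ => (1 - x ^ 2 / 2 + x ^ 4 / 24) - Real.cos x) (fun y => (((0 - (((2 : ℕ) : ℝ) * y ^ (2 - 1)) / 2) + (((4 : ℕ) : ℝ) * y ^ (4 - 1)) / 24) - (-Real.sin y))) (fun y => ?_) (by norm_num) (fun y hy => ?_) 
  · exact ((((hasDerivAt_const y (1:ℝ)).sub ((hasDerivAt_pow 2 y).div_const 2)).add ((hasDerivAt_pow 4 y).div_const 24)).sub (Real.hasDerivAt_cos y))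
  · have h := ladder3 y hy
    push_cast
    nlinarith [h]

lemma ladder5 : ∀ x : ℝ, 0 ≤ x → 0 ≤ (x - x ^ 3 / 6 + x ^ 5 / 120) - Real.sin x := by
  refine aux (fun x : ℝ => (x - x ^ 3 / 6 + x ^ 5 / 120) - Real.sin x) (fun y => (((1 - (((3 : ℕ) : ℝ) * y ^ (3 - 1)) / 6) + (((5 : ℕ) : ℝ) * y ^ (5 - 1)) / 120) - Real.cos y)) (fun y => ?_) (by norm_num) (fun y hy => ?_) 
  · exact ((((hasDerivAt_id y).sub ((hasDerivAt_pow 3 y).div_const 6)).add ((hasDerivAt_pow 5 y).div_const 120)).sub (Real.hasDerivAt_sin y))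
  · have h := ladder4 y hy
    push_cast
    nlinarith [h]

lemma ladder6 : ∀ x : ℝ, 0 ≤ x → 0 ≤ Real.cos x - (1 - x ^ 2 / 2 + x ^ 4 / 24 - x ^ 6 / 720) := by
  refine aux (fun x : ℝ => Real.cos x - (1 - x ^ 2 / 2 + x ^ 4 / 24 - x ^ 6 / 720)) (fun y => ((-Real.sin y) - (((0 - (((2 : ℕ) : ℝ) * y ^ (2 - 1)) / 2) + (((4 : ℕ) : ℝ) * y ^ (4 - 1)) / 24) - (((6 : ℕ) : ℝ) * y ^ (6 - 1)) / 720))) (fun y => ?_) (by norm_num) (fun y hy => ?_) 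
  · exact ((Real.hasDerivAt_cos y).sub ((((hasDerivAt_const y (1:ℝ)).sub ((hasDerivAt_pow 2 y).div_const 2)).add ((hasDerivAt_pow 4 y).div_const 24)).sub ((hasDerivAt_pow 6 y).div_const 720)))
  · have h := ladder5 y hy
    push_cast
    nlinarith [h]

lemma ladder7 : ∀ x : ℝ, 0 ≤ x → 0 ≤ Real.sin x - (x - x ^ 3 / 6 + x ^ 5 / 120 - x ^ 7 / 5040) := by
  refine aux (fun x : ℝ => Real.sin x - (x - x ^ 3 / 6 + x ^ 5 / 120 - x ^ 7 / 5040)) (fun y => (Real.cos y - (((1 - (((3 : ℕ) : ℝ) * y ^ (3 - 1)) / 6) + (((5 : ℕ) : ℝ) * y ^ (5 - 1)) / 120) - (((7 : ℕ) : ℝ) * y ^ (7 - 1)) / 5040))) (fun y => ?_) (by norm_num) (fun y hy => ?_) 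
  · exact ((Real.hasDerivAt_sin y).sub ((((hasDerivAt_id y).sub ((hasDerivAt_pow 3 y).div_const 6)).add ((hasDerivAt_pow 5 y).div_const 120)).sub ((hasDerivAt_pow 7 y).div_const 5040)))
  · have h := ladder6 y hy
    push_cast
    nlinarith [h]

lemma ladder8 : ∀ x : ℝ, 0 ≤ x → 0 ≤ (1 - x ^ 2 / 2 + x ^ 4 / 24 - x ^ 6 / 720 + x ^ 8 / 40320) - Real.cos x := by
  refine aux (fun x : ℝ => (1 - x ^ 2 / 2 + x ^ 4 / 24 - x ^ 6 / 720 + x ^ 8 / 40320) - Real.cos x) (fun y => (((((0 - (((2 : ℕ) : ℝ) * y ^ (2 - 1)) / 2) + (((4 : ℕ) : ℝ) * y ^ (4 - 1)) / 24) - (((6 : ℕ) : ℝ) * y ^ (6 - 1)) / 720) + (((8 : ℕ) : ℝ) * y ^ (8 - 1)) / 40320) - (-Real.sin y))) (fun y => ?_) (by norm_num) (fun y hy => ?_) 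
  · exact ((((((hasDerivAt_const y (1:ℝ)).sub ((hasDerivAt_pow 2 y).div_const 2)).add ((hasDerivAt_pow 4 y).div_const 24)).sub ((hasDerivAt_pow 6 y).div_const 720)).add ((hasDerivAt_pow 8 y).div_const 40320)).sub (Real.hasDerivAt_cos y))
  · have h := ladder7 y hy
    push_cast
    nlinarith [h]

lemma ladder9 : ∀ x : ℝ, 0 ≤ x → 0 ≤ (x - x ^ 3 / 6 + x ^ 5 / 120 - x ^ 7 / 5040 + x ^ 9 / 362880) - Real.sin x := by
  refine aux (fun x : ℝ => (x - x ^ 3 / 6 + x ^ 5 / 120 - x ^ 7 / 5040 + x ^ 9 / 362880) - Real.sin x) (fun y => (((((1 - (((3 : ℕ) : ℝ) * y ^ (3 - 1)) / 6) + (((5 : ℕ) : ℝ) * y ^ (5 - 1)) / 120) - (((7 : ℕ) : ℝ) * y ^ (7 - 1)) / 5040) + (((9 : ℕ) : ℝ) * y ^ (9 - 1)) / 362880) - Real.cos y)) (fun y => ?_) (by norm_num) (fun y hy => ?_) 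
  · exact ((((((hasDerivAt_id y).sub ((hasDerivAt_pow 3 y).div_const 6)).add ((hasDerivAt_pow 5 y).div_const 120)).sub ((hasDerivAt_pow 7 y).div_const 5040)).add ((hasDerivAt_pow 9 y).div_const 362880)).sub (Real.hasDerivAt_sin y))
  · have h := ladder8 y hy
    push_cast
    nlinarith [h]

lemma ladder10 : ∀ x : ℝ, 0 ≤ x → 0 ≤ Real.cos x - (1 - x ^ 2 / 2 + x ^ 4 / 24 - x ^ 6 / 720 + x ^ 8 / 40320 - x ^ 10 / 3628800) := by
  refine aux (fun x : ℝ => Real.cos x - (1 - x ^ 2 / 2 + x ^ 4 / 24 - x ^ 6 / 720 + x ^ 8 / 40320 - x ^ 10 / 3628800)) (fun y => ((-Real.sin y) - (((((0 - (((2 : ℕ) : ℝ) * y ^ (2 - 1)) / 2) + (((4 : ℕ) : ℝ) * y ^ (4 - 1)) / 24) - (((6 : ℕ) : ℝ) * y ^ (6 - 1)) / 720) + (((8 : ℕ) : ℝ) * y ^ (8 - 1)) / 40320) - (((10 : ℕ) : ℝ) * y ^ (10 - 1)) / 3628800))) (fun y => ?_) (by norm_num) (fun y hy => ?_) 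
  · exact ((Real.hasDerivAt_cos y).sub ((((((hasDerivAt_const y (1:ℝ)).sub ((hasDerivAt_pow 2 y).div_const 2)).add ((hasDerivAt_pow 4 y).div_const 24)).sub ((hasDerivAt_pow 6 y).div_const 720)).add ((hasDerivAt_pow 8 y).div_const 40320)).sub ((hasDerivAt_pow 10 y).div_const 3628800)))
  · have h := ladder9 y hy
    push_cast
    nlinarith [h]

lemma ladder11 : ∀ x : ℝ, 0 ≤ x → 0 ≤ Real.sin x - (x - x ^ 3 / 6 + x ^ 5 / 120 - x ^ 7 / 5040 + x ^ 9 / 362880 - x ^ 11 / 39916800) := by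
  refine aux (fun x : ℝ => Real.sin x - (x - x ^ 3 / 6 + x ^ 5 / 120 - x ^ 7 / 5040 + x ^ 9 / 362880 - x ^ 11 / 39916800)) (fun y => (Real.cos y - (((((1 - (((3 : ℕ) : ℝ) * y ^ (3 - 1)) / 6) + (((5 : ℕ) : ℝ) * y ^ (5 - 1)) / 120) - (((7 : ℕ) : ℝ) * y ^ (7 - 1)) / 5040) + (((9 : ℕ) : ℝ) * y ^ (9 - 1)) / 362880) - (((11 : ℕ) : ℝ) * y ^ (11 - 1)) / 39916800))) (fun y => ?_) (by norm_num) (fun y hy => ?_) 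
  · exact ((Real.hasDerivAt_sin y).sub ((((((hasDerivAt_id y).sub ((hasDerivAt_pow 3 y).div_const 6)).add ((hasDerivAt_pow 5 y).div_const 120)).sub ((hasDerivAt_pow 7 y).div_const 5040)).add ((hasDerivAt_pow 9 y).div_const 362880)).sub ((hasDerivAt_pow 11 y).div_const 39916800)))
  · have h := ladder10 y hy
    push_cast
    nlinarith [h]

lemma ladder12 : ∀ x : ℝ, 0 ≤ x → 0 ≤ (1 - x ^ 2 / 2 + x ^ 4 / 24 - x ^ 6 / 720 + x ^ 8 / 40320 - x ^ 10 / 3628800 + x ^ 12 / 479001600) - Real.cos x := by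
  refine aux (fun x : ℝ => (1 - x ^ 2 / 2 + x ^ 4 / 24 - x ^ 6 / 720 + x ^ 8 / 40320 - x ^ 10 / 3628800 + x ^ 12 / 479001600) - Real.cos x) (fun y => (((((((0 - (((2 : ℕ) : ℝ) * y ^ (2 - 1)) / 2) + (((4 : ℕ) : ℝ) * y ^ (4 - 1)) / 24) - (((6 : ℕ) : ℝ) * y ^ (6 - 1)) / 720) + (((8 : ℕ) : ℝ) * y ^ (8 - 1)) / 40320) - (((10 : ℕ) : ℝ) * y ^ (10 - 1)) / 3628800) + (((12 : ℕ) : ℝ) * y ^ (12 - 1)) / 479001600) - (-Real.sin y))) (fun y => ?_) (by norm_num) (fun y hy => ?_) 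
  · exact ((((((((hasDerivAt_const y (1:ℝ)).sub ((hasDerivAt_pow 2 y).div_const 2)).add ((hasDerivAt_pow 4 y).div_const 24)).sub ((hasDerivAt_pow 6 y).div_const 720)).add ((hasDerivAt_pow 8 y).div_const 40320)).sub ((hasDerivAt_pow 10 y).div_const 3628800)).add ((hasDerivAt_pow 12 y).div_const 479001600)).sub (Real.hasDerivAt_cos y))
  · have h := ladder11 y hy
    push_cast
    nlinarith [h]

lemma ladder13 : ∀ x : ℝ, 0 ≤ x → 0 ≤ (x - x ^ 3 / 6 + x ^ 5 / 120 - x ^ 7 / 5040 + x ^ 9 / 362880 - x ^ 11 / 39916800 + x ^ 13 / 6227020800) - Real.sin x := by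
  refine aux (fun x : ℝ => (x - x ^ 3 / 6 + x ^ 5 / 120 - x ^ 7 / 5040 + x ^ 9 / 362880 - x ^ 11 / 39916800 + x ^ 13 / 6227020800) - Real.sin x) (fun y => (((((((1 - (((3 : ℕ) : ℝ) * y ^ (3 - 1)) / 6) + (((5 : ℕ) : ℝ) * y ^ (5 - 1)) / 120) - (((7 : ℕ) : ℝ) * y ^ (7 - 1)) / 5040) + (((9 : ℕ) : ℝ) * y ^ (9 - 1)) / 362880) - (((11 : ℕ) : ℝ) * y ^ (11 - 1)) / 39916800) + (((13 : ℕ) : ℝ) * y ^ (13 - 1)) / 6227020800) - Real.cos y)) (fun y => ?_) (by norm_num) (fun y hy => ?_) 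
  · exact ((((((((hasDerivAt_id y).sub ((hasDerivAt_pow 3 y).div_const 6)).add ((hasDerivAt_pow 5 y).div_const 120)).sub ((hasDerivAt_pow 7 y).div_const 5040)).add ((hasDerivAt_pow 9 y).div_const 362880)).sub ((hasDerivAt_pow 11 y).div_const 39916800)).add ((hasDerivAt_pow 13 y).div_const 6227020800)).sub (Real.hasDerivAt_sin y))
  · have h := ladder12 y hy
    push_cast
    nlinarith [h]

lemma ladder14 : ∀ x : ℝ, 0 ≤ x → 0 ≤ Real.cos x - (1 - x ^ 2 / 2 + x ^ 4 / 24 - x ^ 6 / 720 + x ^ 8 / 40320 - x ^ 10 / 3628800 + x ^ 12 / 479001600 - x ^ 14 / 87178291200) := by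
  refine aux (fun x : ℝ => Real.cos x - (1 - x ^ 2 / 2 + x ^ 4 / 24 - x ^ 6 / 720 + x ^ 8 / 40320 - x ^ 10 / 3628800 + x ^ 12 / 479001600 - x ^ 14 / 87178291200)) (fun y => ((-Real.sin y) - (((((((0 - (((2 : ℕ) : ℝ) * y ^ (2 - 1)) / 2) + (((4 : ℕ) : ℝ) * y ^ (4 - 1)) / 24) - (((6 : ℕ) : ℝ) * y ^ (6 - 1)) / 720) + (((8 : ℕ) : ℝ) * y ^ (8 - 1)) / 40320) - (((10 : ℕ) : ℝ) * y ^ (10 - 1)) / 3628800) + (((12 : ℕ) : ℝ) * y ^ (12 - 1)) / 479001600) - (((14 : ℕ) : ℝ) * y ^ (14 - 1)) / 87178291200))) (fun y => ?_) (by norm_num) (fun y hy => ?_) 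
  · exact ((Real.hasDerivAt_cos y).sub ((((((((hasDerivAt_const y (1:ℝ)).sub ((hasDerivAt_pow 2 y).div_const 2)).add ((hasDerivAt_pow 4 y).div_const 24)).sub ((hasDerivAt_pow 6 y).div_const 720)).add ((hasDerivAt_pow 8 y).div_const 40320)).sub ((hasDerivAt_pow 10 y).div_const 3628800)).add ((hasDerivAt_pow 12 y).div_const 479001600)).sub ((hasDerivAt_pow 14 y).div_const 87178291200)))
  · have h := ladder13 y hy
    push_cast
    nlinarith [h]

lemma ladder15 : ∀ x : ℝ, 0 ≤ x → 0 ≤ Real.sin x - (x - x ^ 3 / 6 + x ^ 5 / 120 - x ^ 7 / 5040 + x ^ 9 / 362880 - x ^ 11 / 39916800 + x ^ 13 / 6227020800 - x ^ 15 / 1307674368000) := by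
  refine aux (fun x : ℝ => Real.sin x - (x - x ^ 3 / 6 + x ^ 5 / 120 - x ^ 7 / 5040 + x ^ 9 / 362880 - x ^ 11 / 39916800 + x ^ 13 / 6227020800 - x ^ 15 / 1307674368000)) (fun y => (Real.cos y - (((((((1 - (((3 : ℕ) : ℝ) * y ^ (3 - 1)) / 6) + (((5 : ℕ) : ℝ) * y ^ (5 - 1)) / 120) - (((7 : ℕ) : ℝ) * y ^ (7 - 1)) / 5040) + (((9 : ℕ) : ℝ) * y ^ (9 - 1)) / 362880) - (((11 : ℕ) : ℝ) * y ^ (11 - 1)) / 39916800) + (((13 : ℕ) : ℝ) * y ^ (13 - 1)) / 6227020800) - (((15 : ℕ) : ℝ) * y ^ (15 - 1)) / 1307674368000))) (fun y => ?_) (by norm_num) (fun y hy => ?_) 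
  · exact ((Real.hasDerivAt_sin y).sub ((((((((hasDerivAt_id y).sub ((hasDerivAt_pow 3 y).div_const 6)).add ((hasDerivAt_pow 5 y).div_const 120)).sub ((hasDerivAt_pow 7 y).div_const 5040)).add ((hasDerivAt_pow 9 y).div_const 362880)).sub ((hasDerivAt_pow 11 y).div_const 39916800)).add ((hasDerivAt_pow 13 y).div_const 6227020800)).sub ((hasDerivAt_pow 15 y).div_const 1307674368000)))
  · have h := ladder14 y hy
    push_cast
    nlinarith [h]

lemma ladder16 : ∀ x : ℝ, 0 ≤ x → 0 ≤ (1 - x ^ 2 / 2 + x ^ 4 / 24 - x ^ 6 / 720 + x ^ 8 / 40320 - x ^ 10 / 3628800 + x ^ 12 / 479001600 - x ^ 14 / 87178291200 + x ^ 16 / 20922789888000) - Real.cos x := by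
  refine aux (fun x : ℝ => (1 - x ^ 2 / 2 + x ^ 4 / 24 - x ^ 6 / 720 + x ^ 8 / 40320 - x ^ 10 / 3628800 + x ^ 12 / 479001600 - x ^ 14 / 87178291200 + x ^ 16 / 20922789888000) - Real.cos x) (fun y => (((((((((0 - (((2 : ℕ) : ℝ) * y ^ (2 - 1)) / 2) + (((4 : ℕ) : ℝ) * y ^ (4 - 1)) / 24) - (((6 : ℕ) : ℝ) * y ^ (6 - 1)) / 720) + (((8 : ℕ) : ℝ) * y ^ (8 - 1)) / 40320) - (((10 : ℕ) : ℝ) * y ^ (10 - 1)) / 3628800) + (((12 : ℕ) : ℝ) * y ^ (12 - 1)) / 479001600) - (((14 : ℕ) : ℝ) * y ^ (14 - 1)) / 87178291200) + (((16 : ℕ) : ℝ) * y ^ (16 - 1)) / 20922789888000) - (-Real.sin y))) (fun y => ?_) (by norm_num) (fun y hy => ?_) 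
  · exact ((((((((((hasDerivAt_const y (1:ℝ)).sub ((hasDerivAt_pow 2 y).div_const 2)).add ((hasDerivAt_pow 4 y).div_const 24)).sub ((hasDerivAt_pow 6 y).div_const 720)).add ((hasDerivAt_pow 8 y).div_const 40320)).sub ((hasDerivAt_pow 10 y).div_const 3628800)).add ((hasDerivAt_pow 12 y).div_const 479001600)).sub ((hasDerivAt_pow 14 y).div_const 87178291200)).add ((hasDerivAt_pow 16 y).div_const 20922789888000)).sub (Real.hasDerivAt_cos y))
  · have h := ladder15 y hy
    push_cast
    nlinarith [h]

lemma ladder17 : ∀ x : ℝ, 0 ≤ x → 0 ≤ (x - x ^ 3 / 6 + x ^ 5 / 120 - x ^ 7 / 5040 + x ^ 9 / 362880 - x ^ 11 / 39916800 + x ^ 13 / 6227020800 - x ^ 15 / 1307674368000 + x ^ 17 / 355687428096000) - Real.sin x := by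
  refine aux (fun x : ℝ => (x - x ^ 3 / 6 + x ^ 5 / 120 - x ^ 7 / 5040 + x ^ 9 / 362880 - x ^ 11 / 39916800 + x ^ 13 / 6227020800 - x ^ 15 / 1307674368000 + x ^ 17 / 355687428096000) - Real.sin x) (fun y => (((((((((1 - (((3 : ℕ) : ℝ) * y ^ (3 - 1)) / 6) + (((5 : ℕ) : ℝ) * y ^ (5 - 1)) / 120) - (((7 : ℕ) : ℝ) * y ^ (7 - 1)) / 5040) + (((9 : ℕ) : ℝ) * y ^ (9 - 1)) / 362880) - (((11 : ℕ) : ℝ) * y ^ (11 - 1)) / 39916800) + (((13 : ℕ) : ℝ) * y ^ (13 - 1)) / 6227020800) - (((15 : ℕ) : ℝ) * y ^ (15 - 1)) / 1307674368000) + (((17 : ℕ) : ℝ) * y ^ (17 - 1)) / 355687428096000) - Real.cos y)) (fun y => ?_) (by norm_num) (fun y hy => ?_) 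
  · exact ((((((((((hasDerivAt_id y).sub ((hasDerivAt_pow 3 y).div_const 6)).add ((hasDerivAt_pow 5 y).div_const 120)).sub ((hasDerivAt_pow 7 y).div_const 5040)).add ((hasDerivAt_pow 9 y).div_const 362880)).sub ((hasDerivAt_pow 11 y).div_const 39916800)).add ((hasDerivAt_pow 13 y).div_const 6227020800)).sub ((hasDerivAt_pow 15 y).div_const 1307674368000)).add ((hasDerivAt_pow 17 y).div_const 355687428096000)).sub (Real.hasDerivAt_sin y))
  · have h := ladder16 y hy
    push_cast
    nlinarith [h]

theorem cos_sub_sinx_div_x_cubed_deg10_bounds :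
    ∀ x ∈ Set.Ioo (0 : ℝ) (π / 2),
      -x ^ 4 / 15 + 23 * x ^ 6 / 1890 - 41 * x ^ 8 / 37800
          < Real.cos x - (Real.sin x / x) ^ 3 ∧
      Real.cos x - (Real.sin x / x) ^ 3
          < -x ^ 4 / 15 + 23 * x ^ 6 / 1890 - 41 * x ^ 8 / 37800 +
              53 * x ^ 10 / 831600 := by
  intro x hx
  obtain ⟨hx0, hxp⟩ := hx
  have hx0' : (0:ℝ) ≤ x := hx0.le
  have hxne : x ≠ 0 := ne_of_gt hx0
  have hx2 : x ^ 2 < 2.480625 := by nlinarith [Real.pi_lt_d2]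
  have hx4 : x ^ 4 < 6.153500390625 := by nlinarith [hx2, sq_nonneg x]
  have hx3 : (0:ℝ) < x ^ 3 := pow_pos hx0 3
  have hA := ladder14 x hx0'
  have hB := ladder13 x hx0'
  have hC := ladder15 (3 * x) (by linarith)
  have hD := ladder16 x hx0'
  have hE := ladder15 x hx0'
  have hF := ladder17 (3 * x) (by linarith)
  have hs3 : Real.sin (3 * x) = 3 * Real.sin x - 4 * Real.sin x ^ 3 := Real.sin_three_mul x
  have hA' : x ^ 3 * (1 - x ^ 2 / 2 + x ^ 4 / 24 - x ^ 6 / 720 + x ^ 8 / 40320 - x ^ 10 / 3628800 + x ^ 12 / 479001600 - x ^ 14 / 87178291200) ≤ x ^ 3 * Real.cos x :=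
    mul_le_mul_of_nonneg_left (by linarith) hx3.le
  have hD' : x ^ 3 * Real.cos x ≤ x ^ 3 * (1 - x ^ 2 / 2 + x ^ 4 / 24 - x ^ 6 / 720 + x ^ 8 / 40320 - x ^ 10 / 3628800 + x ^ 12 / 479001600 - x ^ 14 / 87178291200 + x ^ 16 / 20922789888000) :=
    mul_le_mul_of_nonneg_left (by linarith) hx3.le
  have inner1 : (0:ℝ) < 53 / 831600 - 4779329 / 1743565824000 * x ^ 2 - 1 / 87178291200 * x ^ 4 := by
    nlinarith [hx2, hx4]
  have inner2 : (0:ℝ) < 74677 / 27243216000 - 43041281 / 474249904128000 * x ^ 2 - 1 / 20922789888000 * x ^ 4 := by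
    nlinarith [hx2, hx4]
  have m1 := mul_pos (pow_pos hx0 13) inner1
  have m2 := mul_pos (pow_pos hx0 15) inner2
  have kl : x ^ 3 * (-x ^ 4 / 15 + 23 * x ^ 6 / 1890 - 41 * x ^ 8 / 37800)
      < x ^ 3 * Real.cos x - Real.sin x ^ 3 := by
    linarith [hA', hB, hC, hs3, m1]
  have ku : x ^ 3 * Real.cos x - Real.sin x ^ 3
      < x ^ 3 * (-x ^ 4 / 15 + 23 * x ^ 6 / 1890 - 41 * x ^ 8 / 37800 + 53 * x ^ 10 / 831600) := by
    linarith [hD', hE, hF, hs3, m2]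
  have e : Real.cos x - (Real.sin x / x) ^ 3 = (x ^ 3 * Real.cos x - Real.sin x ^ 3) / x ^ 3 := by
    field_simp
  rw [e]
  constructor
  · rw [lt_div_iff₀ hx3]
    linarith [kl]
  · rw [div_lt_iff₀ hx3]
    linarith [ku]
end

section
/- For every x ∈ (0, π/2), 2 + (2/45)x⁴ + (2/π)⁶·(-2 + π²/4 - π⁴/360)·x⁶ > (x/sin x)² + x/tan x > 2 + (2/45)x⁴ + (8/945)x⁶. -/
/-!
Put `t = 2x`. Then `4 sin² x = 2 (1 - cos t)` and `4 x sin x cos x = t sin t`, so the bound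
`2 + (2/45) x⁴ + a x⁶` exceeds `(x / sin x)² + x cos x / sin x` exactly when
`boundGap (a / 32) t = (4 + t⁴/180 + (a/32) t⁶)(1 - cos t) - (t² + t sin t)` is positive.

For `a = 8/945` the gap is negative on `(0, π]`: bounding `sin` and `cos` by their Taylor
polynomials of degree 11 and 10 (alternating-sign bounds, each obtained from the previous one
by integrating over `[0, t]`) leaves `-t¹⁰ p(t²)` with a cubic `p` positive on `[0, 10]`.
The coefficient of the upper bound is the one that makes the gap vanish at `t = π`. Since it
lies in `[409·10⁻⁶, 41·10⁻⁵]`, Taylor bounds of degree 13 and 12 give positivity on `(0, 3]`,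
and on `[3, π]` the same bounds show that the gap is strictly decreasing, hence positive
before its zero at `π`.
-/

open Real
open scoped Nat

noncomputable def sinTaylor (n : ℕ) (x : ℝ) : ℝ :=
  ∑ k ∈ Finset.range n, (-1) ^ k * (x ^ (2 * k + 1) / (2 * k + 1)!)

noncomputable def cosTaylor (n : ℕ) (x : ℝ) : ℝ :=
  ∑ k ∈ Finset.range n, (-1) ^ k * (x ^ (2 * k) / (2 * k)!)

theorem hasDerivAt_pow_succ_div_factorial (m : ℕ) (x : ℝ) :
    HasDerivAt (fun y : ℝ => y ^ (m + 1) / (m + 1)!) (x ^ m / m !) x := by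
  refine ((hasDerivAt_pow (m + 1) x).div_const ((m + 1)! : ℝ)).congr_deriv ?_
  rw [Nat.factorial_succ]
  push_cast
  field_simp

theorem hasDerivAt_sinTaylor (n : ℕ) (x : ℝ) : HasDerivAt (sinTaylor n) (cosTaylor n x) x :=
  HasDerivAt.fun_sum fun k _ => (hasDerivAt_pow_succ_div_factorial (2 * k) x).const_mul _

theorem cosTaylor_succ_eq (n : ℕ) (x : ℝ) :
    cosTaylor (n + 1) x
      = 1 - ∑ k ∈ Finset.range n, (-1) ^ k * (x ^ (2 * k + 1 + 1) / (2 * k + 1 + 1)!) := by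
  rw [cosTaylor, Finset.sum_range_succ', sub_eq_neg_add, ← Finset.sum_neg_distrib]
  simp only [pow_succ, mul_add, mul_one, neg_mul, mul_neg, pow_zero, mul_zero, Nat.factorial_zero,
    Nat.cast_one, div_one]

theorem hasDerivAt_cosTaylor_succ (n : ℕ) (x : ℝ) :
    HasDerivAt (cosTaylor (n + 1)) (-sinTaylor n x) x := by
  rw [funext (cosTaylor_succ_eq n), sinTaylor]
  exact ((hasDerivAt_const x 1).fun_sub (HasDerivAt.fun_sum fun k _ =>
    (hasDerivAt_pow_succ_div_factorial (2 * k + 1) x).const_mul _)).congr_deriv (zero_sub _)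

theorem nonneg_of_hasDerivAt_nonneg {F F' : ℝ → ℝ} (hF : ∀ y, 0 ≤ y → HasDerivAt F (F' y) y)
    (hF' : ∀ y, 0 ≤ y → 0 ≤ F' y) (h0 : F 0 = 0) {x : ℝ} (hx : 0 ≤ x) : 0 ≤ F x := by
  have hmono : MonotoneOn F (Set.Ici 0) := by
    refine monotoneOn_of_hasDerivWithinAt_nonneg (f' := F') (convex_Ici 0)
      (fun y hy => (hF y hy).continuousAt.continuousWithinAt) (fun y hy => ?_) (fun y hy => ?_)
    · rw [interior_Ici] at hy
      exact (hF y hy.le).hasDerivWithinAt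
    · rw [interior_Ici] at hy
      exact hF' y hy.le
  simpa [h0] using hmono Set.self_mem_Ici hx hx

theorem sin_sub_sinTaylor_sign_of_cos {n : ℕ}
    (hcos : ∀ y, 0 ≤ y → 0 ≤ (-1) ^ n * (cos y - cosTaylor n y)) {x : ℝ} (hx : 0 ≤ x) :
    0 ≤ (-1) ^ n * (sin x - sinTaylor n x) :=
  nonneg_of_hasDerivAt_nonneg
    (fun y _ => ((hasDerivAt_sin y).sub (hasDerivAt_sinTaylor n y)).const_mul _) hcos
    (by simp [sinTaylor]) hx

theorem cos_sub_cosTaylor_succ_sign_of_sin {n : ℕ}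
    (hsin : ∀ y, 0 ≤ y → 0 ≤ (-1) ^ n * (sin y - sinTaylor n y)) {x : ℝ} (hx : 0 ≤ x) :
    0 ≤ (-1) ^ (n + 1) * (cos x - cosTaylor (n + 1) x) :=
  nonneg_of_hasDerivAt_nonneg
    (fun y _ => (((hasDerivAt_cos y).sub (hasDerivAt_cosTaylor_succ n y)).const_mul _).congr_deriv
      (by ring))
    hsin (by simp [cosTaylor_succ_eq]) hx

theorem cos_sub_cosTaylor_sign {n : ℕ} (hn : 1 ≤ n) {x : ℝ} (hx : 0 ≤ x) :
    0 ≤ (-1) ^ n * (cos x - cosTaylor n x) := by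
  induction n, hn using Nat.le_induction generalizing x with
  | base => simpa [cosTaylor] using cos_le_one x
  | succ n _ ih =>
    exact cos_sub_cosTaylor_succ_sign_of_sin
      (fun _ hy => sin_sub_sinTaylor_sign_of_cos (fun _ hz => ih hz) hy) hx

theorem sin_sub_sinTaylor_sign {n : ℕ} (hn : 1 ≤ n) {x : ℝ} (hx : 0 ≤ x) :
    0 ≤ (-1) ^ n * (sin x - sinTaylor n x) :=
  sin_sub_sinTaylor_sign_of_cos (fun _ hy => cos_sub_cosTaylor_sign hn hy) hx

theorem sinTaylor_le_sin {n : ℕ} (hn : 1 ≤ n) (he : Even n) {x : ℝ} (hx : 0 ≤ x) :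
    sinTaylor n x ≤ sin x := by
  simpa [he.neg_one_pow] using sin_sub_sinTaylor_sign hn hx

theorem sin_le_sinTaylor {n : ℕ} (ho : Odd n) {x : ℝ} (hx : 0 ≤ x) : sin x ≤ sinTaylor n x := by
  simpa [ho.neg_one_pow] using sin_sub_sinTaylor_sign ho.pos hx

theorem cosTaylor_le_cos {n : ℕ} (hn : 1 ≤ n) (he : Even n) {x : ℝ} (hx : 0 ≤ x) :
    cosTaylor n x ≤ cos x := by
  simpa [he.neg_one_pow] using cos_sub_cosTaylor_sign hn hx

theorem cos_le_cosTaylor {n : ℕ} (ho : Odd n) {x : ℝ} (hx : 0 ≤ x) : cos x ≤ cosTaylor n x := by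
  simpa [ho.neg_one_pow] using cos_sub_cosTaylor_sign ho.pos hx

noncomputable def boundGap (c t : ℝ) : ℝ :=
  (4 + t ^ 4 / 180 + c * t ^ 6) * (1 - cos t) - (t ^ 2 + t * sin t)

noncomputable def piCoeff : ℝ := 2 * (π ^ 2 / 4 - 2 - π ^ 4 / 360) / π ^ 6

theorem boundGap_le_boundGap {c c' : ℝ} (h : c ≤ c') (t : ℝ) :
    boundGap c t ≤ boundGap c' t := by
  have hcos := cos_le_one t
  unfold boundGap
  gcongr

theorem boundGap_neg {t : ℝ} (ht : 0 < t) (htπ : t ≤ π) : boundGap (1 / 3780) t < 0 := by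
  have hsin : sinTaylor 6 t ≤ sin t := sinTaylor_le_sin (by norm_num) ⟨3, rfl⟩ ht.le
  have hcos : cosTaylor 6 t ≤ cos t := cosTaylor_le_cos (by norm_num) ⟨3, rfl⟩ ht.le
  have hu : t ^ 2 ≤ 10 := by nlinarith [pi_lt_d2]
  have hu0 : 0 ≤ t ^ 2 := by positivity
  have hpoly :
      0 < 1/201600 - 61/239500800*t^2 + 23/4572288000*(t^2)^2 - 1/13716864000*(t^2)^3 := by
    nlinarith [mul_nonneg hu0 (sub_nonneg.2 hu), mul_nonneg (pow_nonneg hu0 2) (sub_nonneg.2 hu)]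
  calc boundGap (1 / 3780) t
      ≤ (4 + t ^ 4 / 180 + 1 / 3780 * t ^ 6) * (1 - cosTaylor 6 t)
        - (t ^ 2 + t * sinTaylor 6 t) := by
        unfold boundGap; gcongr
    _ = -(t ^ 10 *
          (1/201600 - 61/239500800*t^2 + 23/4572288000*(t^2)^2 - 1/13716864000*(t^2)^3)) := by
        simp only [sinTaylor, cosTaylor, Finset.sum_range_succ, Finset.sum_range_zero,
          Nat.factorial, Nat.cast_mul, Nat.cast_one, Nat.succ_eq_add_one]
        ring
    _ < 0 := neg_neg_of_pos (mul_pos (by positivity) hpoly)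

theorem boundGap_pos_of_le_three {t : ℝ} (ht : 0 < t) (ht3 : t ≤ 3) :
    0 < boundGap (409 / 1000000) t := by
  have hsin : sin t ≤ sinTaylor 7 t := sin_le_sinTaylor ⟨3, rfl⟩ ht.le
  have hcos : cos t ≤ cosTaylor 7 t := cos_le_cosTaylor ⟨3, rfl⟩ ht.le
  have hu : t ^ 2 ≤ 9 := by nlinarith
  have hu0 : 0 ≤ t ^ 2 := by positivity
  have hpoly : 0 < 27301/378000000 - 49801/4536000000*t^2 + 669061/1496880000000*(t^2)^2
      - 4097447/467026560000000*(t^2)^3 + 108973/1077753600000000*(t^2)^4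
      - 409/479001600000000*(t^2)^5 := by
    nlinarith [mul_nonneg hu0 (sub_nonneg.2 hu), mul_nonneg (pow_nonneg hu0 2) (sub_nonneg.2 hu),
      mul_nonneg (pow_nonneg hu0 3) (sub_nonneg.2 hu),
      mul_nonneg (pow_nonneg hu0 4) (sub_nonneg.2 hu)]
  calc 0 < t ^ 8 * (27301/378000000 - 49801/4536000000*t^2 + 669061/1496880000000*(t^2)^2
      - 4097447/467026560000000*(t^2)^3 + 108973/1077753600000000*(t^2)^4
      - 409/479001600000000*(t^2)^5) := mul_pos (by positivity) hpoly
    _ = (4 + t ^ 4 / 180 + 409 / 1000000 * t ^ 6) * (1 - cosTaylor 7 t)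
        - (t ^ 2 + t * sinTaylor 7 t) := by
        simp only [sinTaylor, cosTaylor, Finset.sum_range_succ, Finset.sum_range_zero,
          Nat.factorial, Nat.cast_mul, Nat.cast_one, Nat.succ_eq_add_one]
        ring
    _ ≤ boundGap (409 / 1000000) t := by
        unfold boundGap; gcongr

theorem piCoeff_mem_Icc : piCoeff ∈ Set.Icc (409 / 1000000) (41 / 100000) := by
  have h1 := pi_gt_d6
  have h2 := pi_lt_d6
  have h2l : (9.8696002 : ℝ) < π ^ 2 := by nlinarith
  have h2u : π ^ 2 < 9.8696066 := by nlinarith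
  have h4l : (97.408998 : ℝ) < π ^ 4 := by nlinarith
  have h4u : π ^ 4 < 97.409134 := by nlinarith
  have h6l : (961.38766 : ℝ) < π ^ 6 := by
    nlinarith [mul_lt_mul_of_pos_left h2l (show (0 : ℝ) < π ^ 4 by positivity)]
  have h6u : π ^ 6 < 961.39024 := by
    nlinarith [mul_lt_mul_of_pos_left h2u (show (0 : ℝ) < π ^ 4 by positivity)]
  have hp6 : (0 : ℝ) < π ^ 6 := by positivity
  constructor
  · rw [piCoeff, le_div_iff₀ hp6]; nlinarith
  · rw [piCoeff, div_le_iff₀ hp6]; nlinarith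

theorem boundGap_piCoeff_pi : boundGap piCoeff π = 0 := by
  have : π ^ 6 ≠ 0 := by positivity
  simp only [boundGap, piCoeff, cos_pi, sin_pi]
  field_simp
  ring

noncomputable def boundGapDeriv (c y : ℝ) : ℝ :=
  (y ^ 3 / 45 + 6 * c * y ^ 5) * (1 - cos y) + (4 + y ^ 4 / 180 + c * y ^ 6) * sin y
    - (2 * y + (sin y + y * cos y))

theorem hasDerivAt_boundGap (c y : ℝ) : HasDerivAt (boundGap c) (boundGapDeriv c y) y := by
  have hA :
      HasDerivAt (fun y : ℝ => 4 + y ^ 4 / 180 + c * y ^ 6) (y ^ 3 / 45 + 6 * c * y ^ 5) y := by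
    refine (((hasDerivAt_pow 4 y).div_const 180).const_add 4 |>.add
      ((hasDerivAt_pow 6 y).const_mul c)).congr_deriv ?_
    push_cast; ring
  have hB : HasDerivAt (fun y : ℝ => 1 - cos y) (sin y) y := by
    simpa using (hasDerivAt_cos y).const_sub 1
  have hC : HasDerivAt (fun y : ℝ => y ^ 2 + y * sin y) (2 * y + (sin y + y * cos y)) y := by
    refine ((hasDerivAt_pow 2 y).add ((hasDerivAt_id' y).mul (hasDerivAt_sin y))).congr_deriv ?_
    push_cast; ring
  exact (hA.mul hB).sub hC

theorem boundGapDeriv_neg {c y : ℝ} (hc : c ≤ 41 / 100000) (hy : 3 ≤ y) (hyπ : y ≤ π) :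
    boundGapDeriv c y < 0 := by
  have hy0 : 0 ≤ y := by linarith
  have hsin0 : 0 ≤ sin y := sin_nonneg_of_nonneg_of_le_pi hy0 hyπ
  have hcos1 : 0 ≤ 1 - cos y := sub_nonneg.2 (cos_le_one y)
  have hsin_ge : sinTaylor 6 y ≤ sin y := sinTaylor_le_sin (by norm_num) ⟨3, rfl⟩ hy0
  have hsin_le : sin y ≤ sinTaylor 7 y := sin_le_sinTaylor ⟨3, rfl⟩ hy0
  have hcos_ge : cosTaylor 6 y ≤ cos y := cosTaylor_le_cos (by norm_num) ⟨3, rfl⟩ hy0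
  have hu : 9 ≤ y ^ 2 := by nlinarith
  have hu' : y ^ 2 ≤ 10 := by nlinarith [pi_lt_d2]
  have hu0 : 0 ≤ y ^ 2 := by positivity
  have hpoly : 2749/4725000 - 4999/45360000*y^2 + 33557/6237000000*(y^2)^2
      - 2808821/23351328000000*(y^2)^3 + 7493/4490640000000*(y^2)^4
      - 13141/1401079680000000*(y^2)^5 + 41/622702080000000*(y^2)^6 < 0 := by
    have h := mul_nonneg (sub_nonneg.2 hu) (sub_nonneg.2 hu')
    nlinarith [mul_nonneg h hu0, mul_nonneg h (pow_nonneg hu0 2), mul_nonneg h (pow_nonneg hu0 3),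
      mul_nonneg h (pow_nonneg hu0 4)]
  calc boundGapDeriv c y ≤ boundGapDeriv (41 / 100000) y := by
        unfold boundGapDeriv; gcongr
    _ ≤ (y ^ 3 / 45 + 6 * (41 / 100000) * y ^ 5) * (1 - cosTaylor 6 y)
        + (4 + y ^ 4 / 180 + 41 / 100000 * y ^ 6) * sinTaylor 7 y
        - (2 * y + (sinTaylor 6 y + y * cosTaylor 6 y)) := by
        unfold boundGapDeriv; gcongr
    _ = y ^ 7 * (2749/4725000 - 4999/45360000*y^2 + 33557/6237000000*(y^2)^2
      - 2808821/23351328000000*(y^2)^3 + 7493/4490640000000*(y^2)^4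
      - 13141/1401079680000000*(y^2)^5 + 41/622702080000000*(y^2)^6) := by
        simp only [sinTaylor, cosTaylor, Finset.sum_range_succ, Finset.sum_range_zero,
          Nat.factorial, Nat.cast_mul, Nat.cast_one, Nat.succ_eq_add_one]
        ring
    _ < 0 := mul_neg_of_pos_of_neg (by positivity) hpoly

theorem boundGap_piCoeff_pos_of_three_le {t : ℝ} (ht : 3 ≤ t) (htπ : t < π) :
    0 < boundGap piCoeff t := by
  have hanti : StrictAntiOn (boundGap piCoeff) (Set.Icc 3 π) :=
    strictAntiOn_of_hasDerivWithinAt_neg (convex_Icc 3 π)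
      (fun y _ => (hasDerivAt_boundGap piCoeff y).continuousAt.continuousWithinAt)
      (fun y _ => (hasDerivAt_boundGap piCoeff y).hasDerivWithinAt)
      (fun y hy => by
        rw [interior_Icc] at hy
        exact boundGapDeriv_neg piCoeff_mem_Icc.2 hy.1.le hy.2.le)
  have := hanti ⟨ht, htπ.le⟩ ⟨pi_gt_three.le, le_rfl⟩ htπ
  rwa [boundGap_piCoeff_pi] at this

theorem boundGap_piCoeff_pos {t : ℝ} (ht : 0 < t) (htπ : t < π) : 0 < boundGap piCoeff t := by
  rcases le_or_gt t 3 with ht3 | ht3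
  · exact (boundGap_pos_of_le_three ht ht3).trans_le (boundGap_le_boundGap piCoeff_mem_Icc.1 t)
  · exact boundGap_piCoeff_pos_of_three_le ht3.le htπ

theorem add_pow_sub_div_sin_sq_eq_boundGap {x : ℝ} (hx : sin x ≠ 0) (a : ℝ) :
    2 + 2 / 45 * x ^ 4 + a * x ^ 6 - ((x / sin x) ^ 2 + x * cos x / sin x)
      = boundGap (a / 32) (2 * x) / (4 * sin x ^ 2) := by
  have hcos : cos x ^ 2 = 1 - sin x ^ 2 := by linarith [sin_sq_add_cos_sq x]
  rw [boundGap, cos_two_mul, sin_two_mul, hcos]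
  field_simp
  ring

theorem x_div_sinx_sq_add_x_div_tanx_deg6_bounds :
    ∀ x ∈ Set.Ioo (0 : ℝ) (π / 2),
      2 + (2 / 45) * x ^ 4 + (2 / π) ^ 6 * (-2 + π ^ 2 / 4 - π ^ 4 / 360) * x ^ 6
          > (x / Real.sin x) ^ 2 + x * Real.cos x / Real.sin x ∧
      (x / Real.sin x) ^ 2 + x * Real.cos x / Real.sin x
          > 2 + (2 / 45) * x ^ 4 + (8 / 945) * x ^ 6 := by
  rintro x ⟨hx0, hxπ⟩
  have ht : 0 < 2 * x := by linarith
  have htπ : 2 * x < π := by linarith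
  have hsin : 0 < sin x := sin_pos_of_pos_of_lt_pi hx0 (by linarith [pi_pos])
  have hden : 0 < 4 * sin x ^ 2 := by positivity
  have hcoeff : (2 / π) ^ 6 * (-2 + π ^ 2 / 4 - π ^ 4 / 360) / 32 = piCoeff := by
    rw [piCoeff]
    field_simp
    ring
  constructor
  · rw [gt_iff_lt, ← sub_pos, add_pow_sub_div_sin_sq_eq_boundGap hsin.ne', hcoeff]
    exact div_pos (boundGap_piCoeff_pos ht htπ) hden
  · rw [gt_iff_lt, ← sub_neg, add_pow_sub_div_sin_sq_eq_boundGap hsin.ne']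
    rw [show (8 / 945 / 32 : ℝ) = 1 / 3780 by norm_num]
    exact div_neg_of_neg_of_pos (boundGap_neg ht htπ.le) hden
end
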